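/- arXiv:2604.02540 — 2 statements merged into one kernel-verified Lean document; each statement's English description precedes it below -/
import Mathlib

section
/- Let φ: ℝ^n → (−∞, +∞] be proper and lower semicontinuous, let μ > 0, and suppose the proximal mapping prox_{μφ} is single-valued and continuous on a neighborhood U of a point x̄ ∈ ℝ^n. Then the Moreau envelope φ^μ is continuously differentiable on U, and for every x ∈ U its gradient is ∇φ^μ(x) = (1/μ)(x − prox_{μφ}(x)). -/
open scoped RealInnerProductSpace Topology

/-- Norm identity used in the Moreau envelope differentiability proof. -/
lemma moreau_aux_norm_identity {n : ℕ} (a x z : EuclideanSpace ℝ (Fin n)) :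
    ‖a - z‖ ^ 2 - ‖a - x‖ ^ 2 = ‖z - x‖ ^ 2 - 2 * ⟪a - x, z - x⟫ := by
  have h : a - z = (a - x) - (z - x) := by abel
  rw [h, norm_sub_sq_real]
  ring

/-- If `φ : ℝⁿ → (−∞, +∞]` is proper and lower semicontinuous, `μ > 0`,
and the proximal mapping `prox_{μφ}` is single-valued (given by `p`) and continuous on an
open neighborhood `U` of `x̄`, then the Moreau envelope `φ^μ` is continuously differentiable
on `U` with `∇φ^μ(x) = (1/μ)(x − prox_{μφ}(x))`. -/
theorem moreau_envelope_contDiff_on_of_prox_singleValued_continuous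
    {n : ℕ}
    (φ : EuclideanSpace ℝ (Fin n) → EReal)
    (hproper : ∃ y, φ y ≠ ⊤) (hnotbot : ∀ y, φ y ≠ ⊥)
    (hlsc : LowerSemicontinuous φ)
    (μ : ℝ) (hμ : 0 < μ)
    (U : Set (EuclideanSpace ℝ (Fin n))) (hU : IsOpen U)
    (xbar : EuclideanSpace ℝ (Fin n)) (hxbar : xbar ∈ U)
    (p : EuclideanSpace ℝ (Fin n) → EuclideanSpace ℝ (Fin n))
    (hprox : ∀ x ∈ U, ∀ y : EuclideanSpace ℝ (Fin n),
      IsMinOn (fun y => φ y + ((‖y - x‖ ^ 2 / (2 * μ) : ℝ) : EReal)) Set.univ y ↔ y = p x)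
    (hpcont : ContinuousOn p U) :
    (∀ x ∈ U,
      HasGradientAt
        (fun z => (⨅ y, φ y + ((‖y - z‖ ^ 2 / (2 * μ) : ℝ) : EReal)).toReal)
        ((1 / μ) • (x - p x)) x)
    ∧ ContinuousOn (fun x => (1 / μ) • (x - p x)) U := by
  obtain ⟨y₀, hy₀⟩ := hproper
  have h2μ : (0:ℝ) < 2 * μ := by positivity
  -- the minimality inequality
  have hmin : ∀ x ∈ U, ∀ y, φ (p x) + ((‖p x - x‖ ^ 2 / (2 * μ) : ℝ) : EReal)
      ≤ φ y + ((‖y - x‖ ^ 2 / (2 * μ) : ℝ) : EReal) := by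
    intro x hx y
    exact isMinOn_iff.mp ((hprox x hx (p x)).mpr rfl) y (Set.mem_univ y)
  -- φ (p x) is finite on U
  have hfin : ∀ x ∈ U, φ (p x) ≠ ⊤ := by
    intro x hx htop
    have h := hmin x hx y₀
    rw [htop, EReal.top_add_coe] at h
    have hy : φ y₀ = ((φ y₀).toReal : EReal) := (EReal.coe_toReal hy₀ (hnotbot y₀)).symm
    rw [hy, ← EReal.coe_add, top_le_iff] at h
    exact EReal.coe_ne_top _ h
  have hcoe : ∀ x ∈ U, φ (p x) = (((φ (p x)).toReal : ℝ) : EReal) :=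
    fun x hx => (EReal.coe_toReal (hfin x hx) (hnotbot _)).symm
  -- the envelope value
  set f : EuclideanSpace ℝ (Fin n) → ℝ :=
    fun z => (⨅ y, φ y + ((‖y - z‖ ^ 2 / (2 * μ) : ℝ) : EReal)).toReal with hf
  have hval : ∀ x ∈ U, f x = (φ (p x)).toReal + ‖p x - x‖ ^ 2 / (2 * μ) := by
    intro x hx
    obtain ⟨a, ha⟩ : ∃ a : ℝ, φ (p x) = (a : EReal) := ⟨_, hcoe x hx⟩
    have heq : (⨅ y, φ y + ((‖y - x‖ ^ 2 / (2 * μ) : ℝ) : EReal))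
        = ((a + ‖p x - x‖ ^ 2 / (2 * μ) : ℝ) : EReal) := by
      apply le_antisymm
      · refine (iInf_le _ (p x)).trans_eq ?_
        rw [ha, ← EReal.coe_add]
      · refine le_iInf fun y => ?_
        have h := hmin x hx y
        rwa [ha, ← EReal.coe_add] at h
    simp only [hf, heq, EReal.toReal_coe, ha]
  -- key comparison inequality
  have hkey : ∀ x ∈ U, ∀ z ∈ U,
      f z ≤ (φ (p x)).toReal + ‖p x - z‖ ^ 2 / (2 * μ) := by
    intro x hx z hz
    rw [hval z hz]
    have h := hmin z hz (p x)
    rw [hcoe z hz, hcoe x hx, ← EReal.coe_add, ← EReal.coe_add] at h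
    exact_mod_cast h
  constructor
  · intro x hx
    rw [hasGradientAt_iff_isLittleO]
    rw [Asymptotics.isLittleO_iff]
    intro c hc
    have hcμ : (0:ℝ) < c * μ := by positivity
    have hUx : U ∈ 𝓝 x := hU.mem_nhds hx
    have h1 : ∀ᶠ z in 𝓝 x, z ∈ U := hUx
    have h2 : ∀ᶠ z in 𝓝 x, ‖z - x‖ < c * μ := by
      have := Metric.ball_mem_nhds x hcμ
      filter_upwards [this] with z hz
      rwa [Metric.mem_ball, dist_eq_norm] at hz
    have hpc : ContinuousAt p x := hpcont.continuousAt hUx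
    have h3 : ∀ᶠ z in 𝓝 x, ‖p z - p x‖ < c * μ / 2 := by
      have hb : Metric.ball (p x) (c * μ / 2) ∈ 𝓝 (p x) :=
        Metric.ball_mem_nhds _ (by positivity)
      filter_upwards [hpc.eventually_mem hb] with z hz
      rwa [Metric.mem_ball, dist_eq_norm] at hz
    filter_upwards [h1, h2, h3] with z hzU hz2 hz3
    -- the difference quotient
    have hgz : ⟪(1 / μ) • (x - p x), z - x⟫ = (1 / μ) * ⟪x - p x, z - x⟫ :=
      real_inner_smul_left _ _ _
    have hub : f z - f x - ⟪(1 / μ) • (x - p x), z - x⟫ ≤ ‖z - x‖ ^ 2 / (2 * μ) := by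
      have h1' := hkey x hx z hzU
      rw [hval x hx]
      have hid := moreau_aux_norm_identity (p x) x z
      have hinner : ⟪x - p x, z - x⟫ = - ⟪p x - x, z - x⟫ := by
        rw [← inner_neg_left]; congr 1; abel
      rw [hgz, hinner]
      have : f z - ((φ (p x)).toReal + ‖p x - x‖ ^ 2 / (2 * μ))
          ≤ (‖z - x‖ ^ 2 - 2 * ⟪p x - x, z - x⟫) / (2 * μ) := by
        rw [← hid, sub_div]
        linarith [h1']
      calc f z - ((φ (p x)).toReal + ‖p x - x‖ ^ 2 / (2 * μ)) - 1 / μ * -⟪p x - x, z - x⟫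
          ≤ (‖z - x‖ ^ 2 - 2 * ⟪p x - x, z - x⟫) / (2 * μ) + 1 / μ * ⟪p x - x, z - x⟫ := by
            linarith [this]
        _ = ‖z - x‖ ^ 2 / (2 * μ) := by field_simp; ring
    have hlb : -(‖p z - p x‖ * ‖z - x‖ / μ)
        ≤ f z - f x - ⟪(1 / μ) • (x - p x), z - x⟫ := by
      have h1' := hkey z hzU x hx
      have hvz := hval z hzU
      have hid := moreau_aux_norm_identity (p z) x z
      have hinner : ⟪x - p x, z - x⟫ = - ⟪p x - x, z - x⟫ := by
        rw [← inner_neg_left]; congr 1; abel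
      rw [hgz, hinner]
      have hlow : (‖z - x‖ ^ 2 - 2 * ⟪p z - x, z - x⟫) / (2 * μ) ≤ f z - f x := by
        rw [← hid, hvz]
        have : (‖p z - z‖ ^ 2 - ‖p z - x‖ ^ 2) / (2 * μ)
            = ((φ (p z)).toReal + ‖p z - z‖ ^ 2 / (2 * μ))
              - ((φ (p z)).toReal + ‖p z - x‖ ^ 2 / (2 * μ)) := by ring
        rw [this]
        linarith [h1']
      have hsplit : ⟪p z - x, z - x⟫ = ⟪p z - p x, z - x⟫ + ⟪p x - x, z - x⟫ := by
        rw [← inner_add_left]; congr 1; abel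
      have hcs : ⟪p z - p x, z - x⟫ ≤ ‖p z - p x‖ * ‖z - x‖ := real_inner_le_norm _ _
      have hnn : (0:ℝ) ≤ ‖z - x‖ ^ 2 / (2 * μ) := by positivity
      have hμ' : μ ≠ 0 := ne_of_gt hμ
      have : f z - f x - 1 / μ * -⟪p x - x, z - x⟫
          ≥ (‖z - x‖ ^ 2 - 2 * ⟪p z - x, z - x⟫) / (2 * μ) + 1 / μ * ⟪p x - x, z - x⟫ := by
        linarith [hlow]
      have heq : (‖z - x‖ ^ 2 - 2 * ⟪p z - x, z - x⟫) / (2 * μ) + 1 / μ * ⟪p x - x, z - x⟫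
          = ‖z - x‖ ^ 2 / (2 * μ) - ⟪p z - p x, z - x⟫ / μ := by
        rw [hsplit]; field_simp; ring
      rw [heq] at this
      have : f z - f x - 1 / μ * -⟪p x - x, z - x⟫
          ≥ - (⟪p z - p x, z - x⟫ / μ) := by linarith
      have hdiv : ⟪p z - p x, z - x⟫ / μ ≤ ‖p z - p x‖ * ‖z - x‖ / μ := by gcongr
      linarith
    rw [Real.norm_eq_abs, abs_le]
    have hn1 : (0:ℝ) ≤ ‖z - x‖ := norm_nonneg _
    have hn2 : (0:ℝ) ≤ ‖p z - p x‖ := norm_nonneg _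
    have hcx : (0:ℝ) ≤ c * ‖z - x‖ := by positivity
    constructor
    · have : ‖p z - p x‖ * ‖z - x‖ / μ ≤ c * ‖z - x‖ / 2 := by
        rw [div_le_iff₀ hμ]
        nlinarith
      linarith
    · have hsq : ‖z - x‖ ^ 2 / (2 * μ) ≤ c * ‖z - x‖ / 2 := by
        rw [div_le_iff₀ h2μ]
        nlinarith
      linarith
  · exact (continuousOn_id.sub hpcont).const_smul (1 / μ)
end

section
/- Let F ⊂ ℝ^n be a nonempty compact convex set with 0 in its interior, let ρ_F be its Minkowski functional, let A = {a¹, …, a^m} ⊂ ℝ^n be a finite set of points, and let k ≥ 1. For x = (x¹, …, x^k) ∈ ℝ^{nk} define g(x) = Σ_{i=1}^m Σ_{r=1}^k ρ_F(x^r − a^i) and h(x) = Σ_{i=1}^m max_{ℓ=1,…,k} Σ_{r≠ℓ} ρ_F(x^r − a^i). Then the objective f_F(x) = Σ_{i=1}^m min_{ℓ=1,…,k} ρ_F(x^ℓ − a^i) satisfies f_F(x) = g(x) − h(x) for all x ∈ ℝ^{nk}, and both g and h are convex functions on ℝ^{nk}. -/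
open Finset

/-- Sum over a finset of convex functions is convex. -/
lemma convexOn_finset_sum' {E : Type*} [AddCommGroup E] [Module ℝ E]
    {ι : Type*} (t : Finset ι) (f : ι → E → ℝ)
    (hf : ∀ i ∈ t, ConvexOn ℝ Set.univ (f i)) :
    ConvexOn ℝ Set.univ (fun x => ∑ i ∈ t, f i x) := by
  classical
  induction t using Finset.induction with
  | empty => simpa using convexOn_const (0 : ℝ) convex_univ
  | @insert j s hjs ih =>
    simp only [Finset.sum_insert hjs]
    exact (hf j (Finset.mem_insert_self _ _)).add
      (ih fun i hi => hf i (Finset.mem_insert_of_mem hi))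

/-- A finite supremum of convex functions is convex. -/
lemma convexOn_ciSup_fin {E : Type*} [AddCommGroup E] [Module ℝ E]
    {k : ℕ} [NeZero k] (f : Fin k → E → ℝ)
    (hf : ∀ ℓ, ConvexOn ℝ Set.univ (f ℓ)) :
    ConvexOn ℝ Set.univ (fun x => ⨆ ℓ, f ℓ x) := by
  have hne : (Finset.univ : Finset (Fin k)).Nonempty := Finset.univ_nonempty
  have key : ∀ x : E, (⨆ ℓ, f ℓ x) = Finset.univ.sup' hne (fun ℓ => f ℓ x) := fun x =>
    (Finset.sup'_univ_eq_ciSup (fun ℓ => f ℓ x)).symm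
  simp only [key]
  refine ⟨convex_univ, fun x _ y _ p q hp hq hpq => ?_⟩
  refine Finset.sup'_le _ _ fun ℓ _ => ?_
  calc f ℓ (p • x + q • y) ≤ p * f ℓ x + q * f ℓ y :=
        (hf ℓ).2 (Set.mem_univ x) (Set.mem_univ y) hp hq hpq
    _ ≤ p * (Finset.univ.sup' hne fun ℓ => f ℓ x)
        + q * (Finset.univ.sup' hne fun ℓ => f ℓ y) := by
        gcongr
        · exact Finset.le_sup' (fun j => f j x) (Finset.mem_univ ℓ)
        · exact Finset.le_sup' (fun j => f j y) (Finset.mem_univ ℓ)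

/-- DC decomposition of the generalized multi-source Weber objective:
with `g(x) = Σᵢ Σᵣ ρ_F(xʳ − aⁱ)` and `h(x) = Σᵢ max_ℓ Σ_{r ≠ ℓ} ρ_F(xʳ − aⁱ)` one has
`f_F(x) = Σᵢ min_ℓ ρ_F(x^ℓ − aⁱ) = g(x) − h(x)`, and both `g` and `h` are convex. -/
theorem weber_dc_decomposition
    {n m k : ℕ} (hk : 1 ≤ k)
    (F : Set (EuclideanSpace ℝ (Fin n)))
    (hne : F.Nonempty) (hcomp : IsCompact F) (hconv : Convex ℝ F)
    (h0 : (0 : EuclideanSpace ℝ (Fin n)) ∈ interior F)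
    (a : Fin m → EuclideanSpace ℝ (Fin n)) :
    (∀ x : Fin k → EuclideanSpace ℝ (Fin n),
        (∑ i : Fin m, ⨅ ℓ : Fin k, gauge F (x ℓ - a i))
          = (∑ i : Fin m, ∑ r : Fin k, gauge F (x r - a i))
            - (∑ i : Fin m, ⨆ ℓ : Fin k, ∑ r ∈ Finset.univ.erase ℓ, gauge F (x r - a i)))
    ∧ ConvexOn ℝ Set.univ
        (fun x : Fin k → EuclideanSpace ℝ (Fin n) =>
          ∑ i : Fin m, ∑ r : Fin k, gauge F (x r - a i))
    ∧ ConvexOn ℝ Set.univ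
        (fun x : Fin k → EuclideanSpace ℝ (Fin n) =>
          ∑ i : Fin m, ⨆ ℓ : Fin k, ∑ r ∈ Finset.univ.erase ℓ, gauge F (x r - a i)) := by
  haveI : NeZero k := ⟨Nat.one_le_iff_ne_zero.mp hk⟩
  haveI : Nonempty (Fin k) := ⟨⟨0, hk⟩⟩
  have habs : Absorbent ℝ F := absorbent_nhds_zero (mem_interior_iff_mem_nhds.mp h0)
  -- convexity of the basic pieces
  have hbasic : ∀ (r : Fin k) (i : Fin m),
      ConvexOn ℝ Set.univ (fun x : Fin k → EuclideanSpace ℝ (Fin n) => gauge F (x r - a i)) := by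
    intro r i
    refine ⟨convex_univ, fun x _ y _ p q hp hq hpq => ?_⟩
    simp only [smul_eq_mul]
    show gauge F ((p • x + q • y) r - a i) ≤ p * gauge F (x r - a i) + q * gauge F (y r - a i)
    have h2 : p • (x r - a i) + q • (y r - a i) = p • x r + q • y r - (p + q) • a i := by
      module
    rw [hpq, one_smul] at h2
    have h1 : (p • x + q • y) r - a i = p • (x r - a i) + q • (y r - a i) := by
      rw [h2]; simp [Pi.add_apply]
    rw [h1]
    calc gauge F (p • (x r - a i) + q • (y r - a i))
        ≤ gauge F (p • (x r - a i)) + gauge F (q • (y r - a i)) :=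
          gauge_add_le hconv habs _ _
      _ = p * gauge F (x r - a i) + q * gauge F (y r - a i) := by
          rw [gauge_smul_of_nonneg hp, gauge_smul_of_nonneg hq, smul_eq_mul, smul_eq_mul]
  have hg : ConvexOn ℝ Set.univ
      (fun x : Fin k → EuclideanSpace ℝ (Fin n) =>
        ∑ i : Fin m, ∑ r : Fin k, gauge F (x r - a i)) := by
    refine convexOn_finset_sum' _ _ fun i _ => convexOn_finset_sum' _ _ fun r _ => hbasic r i
  have hh : ConvexOn ℝ Set.univ
      (fun x : Fin k → EuclideanSpace ℝ (Fin n) =>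
        ∑ i : Fin m, ⨆ ℓ : Fin k, ∑ r ∈ Finset.univ.erase ℓ, gauge F (x r - a i)) := by
    refine convexOn_finset_sum' _ _ fun i _ => ?_
    exact convexOn_ciSup_fin _ fun ℓ => convexOn_finset_sum' _ _ fun r _ => hbasic r i
  refine ⟨?_, hg, hh⟩
  intro x
  have hune : (Finset.univ : Finset (Fin k)).Nonempty := Finset.univ_nonempty
  have key : ∀ i : Fin m,
      (⨆ ℓ : Fin k, ∑ r ∈ Finset.univ.erase ℓ, gauge F (x r - a i))
        = (∑ r : Fin k, gauge F (x r - a i)) - ⨅ ℓ : Fin k, gauge F (x ℓ - a i) := by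
    intro i
    set t : Fin k → ℝ := fun r => gauge F (x r - a i) with ht
    have herase : ∀ ℓ : Fin k, (∑ r ∈ Finset.univ.erase ℓ, t r) = (∑ r : Fin k, t r) - t ℓ :=
      fun ℓ => Finset.sum_erase_eq_sub (Finset.mem_univ ℓ)
    rw [← Finset.sup'_univ_eq_ciSup, ← Finset.inf'_univ_eq_ciInf]
    apply le_antisymm
    · refine Finset.sup'_le _ _ fun ℓ _ => ?_
      rw [herase ℓ]
      have : Finset.univ.inf' hune t ≤ t ℓ := Finset.inf'_le _ (Finset.mem_univ ℓ)
      linarith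
    · obtain ⟨ℓ₀, _, hℓ₀⟩ := Finset.exists_mem_eq_inf' hune t
      rw [hℓ₀]
      have : (∑ r ∈ Finset.univ.erase ℓ₀, t r) ≤
          Finset.univ.sup' hune (fun ℓ => ∑ r ∈ Finset.univ.erase ℓ, t r) :=
        Finset.le_sup' (fun ℓ => ∑ r ∈ Finset.univ.erase ℓ, t r) (Finset.mem_univ ℓ₀)
      rw [herase ℓ₀] at this
      linarith
  rw [← Finset.sum_sub_distrib]
  exact Finset.sum_congr rfl fun i _ => by rw [key i]; ring
end
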